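/- arXiv:2412.01326 — 2 statements merged into one kernel-verified Lean document; each statement's English description precedes it below -/
import Mathlib

section
/- Let K = {λ ∈ ℝ^{n_λ} : g(λ) ≥ 0 componentwise} for a function g : ℝ^{n_λ} → ℝ^{n_g}, and assume K is nonempty, closed and convex. Let d : ℝ^{n_λ} → ℝ be differentiable and m-strongly convex (m > 0), c > 0, and let F : ℝ^{n_x} × ℝ^{n_u} × ℝ^{n_λ} → ℝ^{n_λ} be any function. Then for all (x, u, λ): λ ∈ SOL(K, F(x, u, λ)) if and only if there exists η ∈ ℝ^{n_λ} such that F(x, u, λ) − η = 0, g(λ) ≥ 0, and φ^c(λ, η) ≤ 0. -/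
/-!
Strong convexity of `d` gives `L^c(λ, η, ω) ≤ ⟨η, λ - ω⟩ - (c m / 2) ‖ω - λ‖²`. Hence the
variational inequality with `η = F(x, u, λ)` makes every value of `L^c(λ, η, ·)` on `K` nonpositive,
and in any case these values are bounded above, so `φ^c(λ, η)` is a genuine supremum.
Conversely, if `φ^c(λ, η) ≤ 0` then, since `L^c(λ, η, λ) = 0`, the point `λ` maximizes
`L^c(λ, η, ·)` over the convex set `K`; the derivative of this function at `λ` is `-⟨η, ·⟩`,
and the first-order condition at a maximum on a convex set is exactly the variational inequality.
-/

open scoped RealInnerProductSpace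

/-- Auchmuty's function `L^c(λ, η, ω) = c·d(λ) − c·d(ω) + ⟨η − c·∇d(λ), λ − ω⟩`. -/
noncomputable def Auchmuty {n : ℕ} (c : ℝ) (d : EuclideanSpace ℝ (Fin n) → ℝ)
    (lam eta om : EuclideanSpace ℝ (Fin n)) : ℝ :=
  c * d lam - c * d om + ⟪eta - c • gradient d lam, lam - om⟫

/-- The generalized primal gap function `φ^c(λ, η) = sup_{ω ∈ K} L^c(λ, η, ω)`. -/
noncomputable def primalGap {n : ℕ} (K : Set (EuclideanSpace ℝ (Fin n))) (c : ℝ)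
    (d : EuclideanSpace ℝ (Fin n) → ℝ) (lam eta : EuclideanSpace ℝ (Fin n)) : ℝ :=
  sSup (Auchmuty c d lam eta '' K)

variable {n : ℕ} {c m : ℝ} {d : EuclideanSpace ℝ (Fin n) → ℝ}
  {K : Set (EuclideanSpace ℝ (Fin n))} {lam eta om : EuclideanSpace ℝ (Fin n)}

theorem Auchmuty_self : Auchmuty c d lam eta lam = 0 := by
  simp [Auchmuty]

theorem hasFDerivAt_Auchmuty (hd : DifferentiableAt ℝ d lam) :
    HasFDerivAt (Auchmuty c d lam eta) (-innerSL ℝ eta) lam := by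
  have h := ((hasFDerivAt_const (c * d lam) lam).sub (hd.hasFDerivAt.const_mul c)).add
    ((innerSL ℝ (eta - c • gradient d lam)).hasFDerivAt.comp lam
      ((hasFDerivAt_const lam lam).sub (hasFDerivAt_id lam)))
  refine h.congr_fderiv ?_
  ext v
  simp only [zero_sub, gradient, map_sub, map_smul, ContinuousLinearMap.comp_neg,
    ContinuousLinearMap.comp_id, neg_sub, add_apply, neg_apply, smul_apply, smul_eq_mul,
    sub_apply, innerSL_apply_apply, InnerProductSpace.toDual_symm_apply]
  ring

theorem Auchmuty_le_inner_sub_sq (hc : 0 ≤ c)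
    (hstrong : d lam + ⟪gradient d lam, om - lam⟫ + m / 2 * ‖om - lam‖ ^ 2 ≤ d om) :
    Auchmuty c d lam eta om ≤ ⟪eta, lam - om⟫ - c * m / 2 * ‖om - lam‖ ^ 2 := by
  have hinner : ⟪eta - c • gradient d lam, lam - om⟫
      = ⟪eta, lam - om⟫ + c * ⟪gradient d lam, om - lam⟫ := by
    rw [inner_sub_left, real_inner_smul_left, ← neg_sub om lam, inner_neg_right,
      inner_neg_right, mul_neg, sub_neg_eq_add]
  rw [Auchmuty, hinner]
  nlinarith [mul_le_mul_of_nonneg_left hstrong hc]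

theorem Auchmuty_le_sq_div (hc : 0 < c) (hm : 0 < m)
    (hstrong : d lam + ⟪gradient d lam, om - lam⟫ + m / 2 * ‖om - lam‖ ^ 2 ≤ d om) :
    Auchmuty c d lam eta om ≤ ‖eta‖ ^ 2 / (2 * (c * m)) := by
  have hcm : 0 < c * m := mul_pos hc hm
  have hCS : ⟪eta, lam - om⟫ ≤ ‖eta‖ * ‖om - lam‖ := by
    rw [norm_sub_rev om]
    exact real_inner_le_norm _ _
  rw [le_div_iff₀ (by positivity)]
  nlinarith [Auchmuty_le_inner_sub_sq (eta := eta) hc.le hstrong,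
    sq_nonneg (c * m * ‖om - lam‖ - ‖eta‖)]

theorem primalGap_nonpos_iff (h : BddAbove (Auchmuty c d lam eta '' K)) :
    primalGap K c d lam eta ≤ 0 ↔ ∀ om ∈ K, Auchmuty c d lam eta om ≤ 0 := by
  refine ⟨fun hφ om hom => (le_csSup h ⟨om, hom, rfl⟩).trans hφ, fun hL => ?_⟩
  exact Real.sSup_nonpos (Set.forall_mem_image.2 hL)

theorem primalGap_nonpos_of_forall_inner_nonneg (hc : 0 ≤ c) (hm : 0 ≤ m)
    (hstrong : ∀ om, d lam + ⟪gradient d lam, om - lam⟫ + m / 2 * ‖om - lam‖ ^ 2 ≤ d om)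
    (hVI : ∀ om ∈ K, 0 ≤ ⟪om - lam, eta⟫) :
    primalGap K c d lam eta ≤ 0 := by
  refine Real.sSup_nonpos (Set.forall_mem_image.2 fun om hom => ?_)
  have hinner : ⟪eta, lam - om⟫ ≤ 0 := by
    rw [← neg_sub om lam, inner_neg_right, real_inner_comm]
    exact neg_nonpos.2 (hVI om hom)
  have hquad : 0 ≤ c * m / 2 * ‖om - lam‖ ^ 2 := by positivity
  linarith [Auchmuty_le_inner_sub_sq (eta := eta) hc (hstrong om)]

theorem forall_inner_nonneg_of_primalGap_nonpos (hc : 0 < c) (hm : 0 < m)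
    (hstrong : ∀ om, d lam + ⟪gradient d lam, om - lam⟫ + m / 2 * ‖om - lam‖ ^ 2 ≤ d om)
    (hd : DifferentiableAt ℝ d lam) (hK : Convex ℝ K) (hlam : lam ∈ K)
    (hφ : primalGap K c d lam eta ≤ 0) :
    ∀ om ∈ K, 0 ≤ ⟪om - lam, eta⟫ := by
  -- `sSup` of a set that is not bounded above is `0`, so `hφ` alone would say nothing.
  have hbdd : BddAbove (Auchmuty c d lam eta '' K) :=
    ⟨‖eta‖ ^ 2 / (2 * (c * m)), Set.forall_mem_image.2 fun om _ =>
      Auchmuty_le_sq_div hc hm (hstrong om)⟩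
  have hmax : IsMaxOn (Auchmuty c d lam eta) K lam := fun om hom => by
    show Auchmuty c d lam eta om ≤ Auchmuty c d lam eta lam
    rw [Auchmuty_self]
    exact (primalGap_nonpos_iff hbdd).1 hφ om hom
  intro om hom
  have h := hmax.localize.hasFDerivWithinAt_nonpos (hasFDerivAt_Auchmuty hd).hasFDerivWithinAt
    (sub_mem_posTangentConeAt_of_segment_subset (hK.segment_subset hlam hom))
  rw [neg_apply, innerSL_apply_apply, neg_nonpos, real_inner_comm] at h
  exact h

theorem primalGap_nonpos_iff_forall_inner_nonneg (hc : 0 < c) (hm : 0 < m)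
    (hstrong : ∀ om, d lam + ⟪gradient d lam, om - lam⟫ + m / 2 * ‖om - lam‖ ^ 2 ≤ d om)
    (hd : DifferentiableAt ℝ d lam) (hK : Convex ℝ K) (hlam : lam ∈ K) :
    primalGap K c d lam eta ≤ 0 ↔ ∀ om ∈ K, 0 ≤ ⟪om - lam, eta⟫ :=
  ⟨forall_inner_nonneg_of_primalGap_nonpos hc hm hstrong hd hK hlam,
    primalGap_nonpos_of_forall_inner_nonneg hc.le hm.le hstrong⟩

theorem stmt4_general {nl nx nu ng : ℕ}
    (g : EuclideanSpace ℝ (Fin nl) → Fin ng → ℝ)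
    (K : Set (EuclideanSpace ℝ (Fin nl)))
    (hKdef : K = {lam | ∀ i : Fin ng, 0 ≤ g lam i})
    (hKconvex : Convex ℝ K)
    (d : EuclideanSpace ℝ (Fin nl) → ℝ) (m : ℝ) (hm : 0 < m)
    (hddiff : Differentiable ℝ d)
    (hstrong : ∀ x y : EuclideanSpace ℝ (Fin nl),
      d x + ⟪gradient d x, y - x⟫ + m / 2 * ‖y - x‖ ^ 2 ≤ d y)
    (c : ℝ) (hc : 0 < c)
    (F : EuclideanSpace ℝ (Fin nx) → EuclideanSpace ℝ (Fin nu) →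
      EuclideanSpace ℝ (Fin nl) → EuclideanSpace ℝ (Fin nl)) :
    ∀ (x : EuclideanSpace ℝ (Fin nx)) (u : EuclideanSpace ℝ (Fin nu))
      (lam : EuclideanSpace ℝ (Fin nl)),
      (lam ∈ K ∧ ∀ om ∈ K, 0 ≤ ⟪om - lam, F x u lam⟫) ↔
      (∃ eta : EuclideanSpace ℝ (Fin nl), F x u lam - eta = 0 ∧
        (∀ i : Fin ng, 0 ≤ g lam i) ∧ primalGap K c d lam eta ≤ 0) := by
  intro x u lam
  have hmem : lam ∈ K ↔ ∀ i, 0 ≤ g lam i := by rw [hKdef]; rfl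
  have hgap (hlam : lam ∈ K) := primalGap_nonpos_iff_forall_inner_nonneg (eta := F x u lam)
    hc hm (hstrong lam) (hddiff lam) hKconvex hlam
  constructor
  · rintro ⟨hlam, hVI⟩
    exact ⟨F x u lam, sub_self _, hmem.1 hlam, (hgap hlam).2 hVI⟩
  · rintro ⟨eta, heta, hg, hφ⟩
    obtain rfl : F x u lam = eta := sub_eq_zero.1 heta
    exact ⟨hmem.2 hg, (hgap (hmem.2 hg)).1 hφ⟩

/-- primal-gap-constraint-based reformulation of the equilibrium constraint
`λ ∈ SOL(K, F(x, u, λ))`, where `K = {λ : g(λ) ≥ 0}` is nonempty, closed and convex. -/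
theorem stmt4 {nl nx nu ng : ℕ} (hnl : 0 < nl)
    (g : EuclideanSpace ℝ (Fin nl) → Fin ng → ℝ)
    (K : Set (EuclideanSpace ℝ (Fin nl)))
    (hKdef : K = {lam | ∀ i : Fin ng, 0 ≤ g lam i})
    (hK : K.Nonempty) (hKclosed : IsClosed K) (hKconvex : Convex ℝ K)
    (d : EuclideanSpace ℝ (Fin nl) → ℝ) (m : ℝ) (hm : 0 < m)
    (hddiff : Differentiable ℝ d)
    (hstrong : ∀ x y : EuclideanSpace ℝ (Fin nl),
      d x + ⟪gradient d x, y - x⟫ + m / 2 * ‖y - x‖ ^ 2 ≤ d y)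
    (c : ℝ) (hc : 0 < c)
    (F : EuclideanSpace ℝ (Fin nx) → EuclideanSpace ℝ (Fin nu) →
      EuclideanSpace ℝ (Fin nl) → EuclideanSpace ℝ (Fin nl)) :
    ∀ (x : EuclideanSpace ℝ (Fin nx)) (u : EuclideanSpace ℝ (Fin nu))
      (lam : EuclideanSpace ℝ (Fin nl)),
      (lam ∈ K ∧ ∀ om ∈ K, 0 ≤ ⟪om - lam, F x u lam⟫) ↔
      (∃ eta : EuclideanSpace ℝ (Fin nl), F x u lam - eta = 0 ∧
        (∀ i : Fin ng, 0 ≤ g lam i) ∧ primalGap K c d lam eta ≤ 0) :=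
  stmt4_general g K hKdef hKconvex d m hm hddiff hstrong c hc F
end

section
/- Let K ⊆ ℝ^{n_λ} be a nonempty closed convex set, d : ℝ^{n_λ} → ℝ differentiable and m-strongly convex (m > 0), b > a > 0 constants, and F : ℝ^{n_x} × ℝ^{n_u} × ℝ^{n_λ} → ℝ^{n_λ} any function. Then for all (x, u, λ): λ ∈ SOL(K, F(x, u, λ)) if and only if there exists η ∈ ℝ^{n_λ} such that F(x, u, λ) − η = 0 and φ^{ab}(λ, η) ≤ 0. -/
open scoped RealInnerProductSpace

/-- The generalized D-gap function `φ^{ab}(λ, η) = φ^a(λ, η) − φ^b(λ, η)`. -/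
noncomputable def Dgap {n : ℕ} (K : Set (EuclideanSpace ℝ (Fin n))) (a b : ℝ)
    (d : EuclideanSpace ℝ (Fin n) → ℝ) (lam eta : EuclideanSpace ℝ (Fin n)) : ℝ :=
  primalGap K a d lam eta - primalGap K b d lam eta

/-!
Write `L^c(λ, η, ω) = ⟪η, λ - ω⟫ - c·D(ω, λ)`, where the Bregman divergence
`D(ω, λ) = d ω - d λ - ⟪∇d λ, ω - λ⟫` is at least `(m/2)‖ω - λ‖²`. If `λ` solves the VI with
`η = F(x, u, λ)`, then `L^a(λ, η, ·) ≤ 0` on `K`, while `L^b(λ, η, λ) = 0`; so `φ^a ≤ 0 ≤ φ^b`.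
Conversely `L^a ≥ L^b + (b - a)(m/2)‖ω - λ‖²`, so `φ^a ≤ φ^b` forces every near-maximiser of
`L^b(λ, η, ·)` on `K` to lie near `λ`. Hence `λ ∈ K` by closedness and `φ^b ≤ 0`, i.e. `λ`
maximises `L^b(λ, η, ·)` on `K`. Its gradient at `λ` is `-η`, and the first-order condition at
this maximum over the convex set `K` is the VI.
-/

def FirstOrderStrongConvex {n : ℕ} (m : ℝ) (d : EuclideanSpace ℝ (Fin n) → ℝ) : Prop :=
  ∀ x y, d x + ⟪gradient d x, y - x⟫ + m / 2 * ‖y - x‖ ^ 2 ≤ d y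

section Auchmuty

variable {n : ℕ} {K : Set (EuclideanSpace ℝ (Fin n))} {d : EuclideanSpace ℝ (Fin n) → ℝ}
  {m a b c : ℝ} {lam eta om : EuclideanSpace ℝ (Fin n)}

theorem auchmuty_eq_inner_sub_bregman (c : ℝ) (d : EuclideanSpace ℝ (Fin n) → ℝ)
    (lam eta om : EuclideanSpace ℝ (Fin n)) :
    Auchmuty c d lam eta om =
      ⟪eta, lam - om⟫ - c * (d om - d lam - ⟪gradient d lam, om - lam⟫) := by
  simp only [Auchmuty, inner_sub_left, inner_sub_right, real_inner_smul_left]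
  ring

@[simp]
theorem auchmuty_self (c : ℝ) (d : EuclideanSpace ℝ (Fin n) → ℝ)
    (lam eta : EuclideanSpace ℝ (Fin n)) : Auchmuty c d lam eta lam = 0 := by
  simp [Auchmuty]

theorem hasGradientAt_auchmuty (hd : DifferentiableAt ℝ d lam) (c : ℝ)
    (eta : EuclideanSpace ℝ (Fin n)) : HasGradientAt (Auchmuty c d lam eta) (-eta) lam := by
  set w := eta - c • gradient d lam
  have hfun : Auchmuty c d lam eta =
      ((fun _ => c * d lam) - fun y => c * d y) + ((fun _ => ⟪w, lam⟫) - ⇑(innerSL ℝ w)) := by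
    ext om
    simp only [w, Auchmuty, Pi.add_apply, Pi.sub_apply, innerSL_apply_apply, inner_sub_right]
  rw [hasGradientAt_iff_hasFDerivAt, hfun]
  refine (((hasFDerivAt_const _ lam).sub (hd.hasGradientAt.hasFDerivAt.const_mul c)).add
    ((hasFDerivAt_const _ lam).sub (innerSL ℝ w).hasFDerivAt)).congr_fderiv ?_
  ext v
  simp only [w, toDual_gradient, zero_sub, map_sub, map_smul, neg_sub, add_apply, neg_apply,
    smul_apply, smul_eq_mul, sub_apply, coe_innerSL_apply, inner_gradient_left, map_neg,
    InnerProductSpace.toDual_apply_apply]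
  ring

theorem IsMaxOn.inner_nonneg_of_auchmuty (hmax : IsMaxOn (Auchmuty c d lam eta) K lam)
    (hd : DifferentiableAt ℝ d lam) (hK : Convex ℝ K) (hlam : lam ∈ K) (hom : om ∈ K) :
    0 ≤ ⟪om - lam, eta⟫ := by
  have := hmax.localize.hasFDerivWithinAt_nonpos
    (hasGradientAt_auchmuty hd c eta).hasFDerivAt.hasFDerivWithinAt
    (sub_mem_posTangentConeAt_of_segment_subset (hK.segment_subset hlam hom))
  simpa [real_inner_comm] using this

theorem auchmuty_add_le_inner (hd : FirstOrderStrongConvex m d) (hc : 0 ≤ c)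
    (lam eta om : EuclideanSpace ℝ (Fin n)) :
    Auchmuty c d lam eta om + c * (m / 2) * ‖om - lam‖ ^ 2 ≤ ⟪eta, lam - om⟫ := by
  rw [auchmuty_eq_inner_sub_bregman]
  nlinarith [hd lam om]

theorem auchmuty_add_le_auchmuty (hd : FirstOrderStrongConvex m d) (hab : a ≤ b)
    (lam eta om : EuclideanSpace ℝ (Fin n)) :
    Auchmuty b d lam eta om + (b - a) * (m / 2) * ‖om - lam‖ ^ 2 ≤ Auchmuty a d lam eta om := by
  rw [auchmuty_eq_inner_sub_bregman, auchmuty_eq_inner_sub_bregman]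
  nlinarith [hd lam om]

theorem primalGap_nonpos (hd : FirstOrderStrongConvex m d) (hm : 0 ≤ m) (hc : 0 ≤ c)
    (hvi : ∀ om ∈ K, 0 ≤ ⟪om - lam, eta⟫) : primalGap K c d lam eta ≤ 0 := by
  refine Real.sSup_le ?_ le_rfl
  rintro _ ⟨om, hom, rfl⟩
  have hinner : ⟪eta, lam - om⟫ = -⟪om - lam, eta⟫ := by
    rw [real_inner_comm, ← inner_neg_left, neg_sub]
  have hsq : 0 ≤ c * (m / 2) * ‖om - lam‖ ^ 2 := by positivity
  linarith [auchmuty_add_le_inner hd hc lam eta om, hvi om hom]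

theorem bddAbove_auchmuty_image (hd : FirstOrderStrongConvex m d) (hm : 0 < m) (hc : 0 < c)
    (lam eta : EuclideanSpace ℝ (Fin n)) : BddAbove (Auchmuty c d lam eta '' K) := by
  refine ⟨‖eta‖ ^ 2 / (2 * c * m), ?_⟩
  rintro _ ⟨om, -, rfl⟩
  have hinner : ⟪eta, lam - om⟫ ≤ ‖eta‖ * ‖om - lam‖ := by
    rw [norm_sub_rev]; exact real_inner_le_norm _ _
  have hle : Auchmuty c d lam eta om ≤ ‖eta‖ * ‖om - lam‖ - c * (m / 2) * ‖om - lam‖ ^ 2 := by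
    linarith [auchmuty_add_le_inner hd hc.le lam eta om]
  rw [le_div_iff₀ (by positivity)]
  nlinarith [mul_le_mul_of_nonneg_left hle (by positivity : 0 ≤ 2 * c * m),
    sq_nonneg (c * m * ‖om - lam‖ - ‖eta‖)]

theorem auchmuty_le_primalGap (hd : FirstOrderStrongConvex m d) (hm : 0 < m) (hc : 0 < c)
    (lam eta : EuclideanSpace ℝ (Fin n)) (hom : om ∈ K) :
    Auchmuty c d lam eta om ≤ primalGap K c d lam eta :=
  le_csSup (bddAbove_auchmuty_image hd hm hc lam eta) (Set.mem_image_of_mem _ hom)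

theorem primalGap_nonneg (hd : FirstOrderStrongConvex m d) (hm : 0 < m) (hc : 0 < c)
    (hlam : lam ∈ K) : 0 ≤ primalGap K c d lam eta := by
  simpa using auchmuty_le_primalGap hd hm hc lam eta hlam

theorem isMaxOn_auchmuty (hd : FirstOrderStrongConvex m d) (hm : 0 < m) (hc : 0 < c)
    (hgap : primalGap K c d lam eta ≤ 0) : IsMaxOn (Auchmuty c d lam eta) K lam := fun om hom => by
  simpa using (auchmuty_le_primalGap hd hm hc lam eta hom).trans hgap

theorem exists_near_of_primalGap_le (hd : FirstOrderStrongConvex m d) (hm : 0 < m) (ha : 0 < a)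
    (hab : a < b) (hgap : primalGap K a d lam eta ≤ primalGap K b d lam eta) (hK : K.Nonempty)
    {δ : ℝ} (hδ : 0 < δ) :
    ∃ om ∈ K, ‖om - lam‖ < δ ∧
      primalGap K b d lam eta < Auchmuty b d lam eta om + (b - a) * (m / 2) * δ ^ 2 := by
  have hC : 0 < (b - a) * (m / 2) := by nlinarith
  obtain ⟨_, ⟨om, hom, rfl⟩, hlt⟩ := exists_lt_of_lt_csSup (hK.image _)
    (sub_lt_self (primalGap K b d lam eta) (by positivity : 0 < (b - a) * (m / 2) * δ ^ 2))
  refine ⟨om, hom, ?_, by linarith⟩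
  have hclose : (b - a) * (m / 2) * ‖om - lam‖ ^ 2 < (b - a) * (m / 2) * δ ^ 2 := by
    linarith [auchmuty_add_le_auchmuty hd hab.le lam eta om,
      auchmuty_le_primalGap hd hm ha lam eta hom]
  exact lt_of_pow_lt_pow_left₀ 2 hδ.le (lt_of_mul_lt_mul_left hclose hC.le)

theorem mem_of_primalGap_le (hd : FirstOrderStrongConvex m d) (hm : 0 < m) (ha : 0 < a)
    (hab : a < b) (hgap : primalGap K a d lam eta ≤ primalGap K b d lam eta) (hK : K.Nonempty)
    (hKc : IsClosed K) : lam ∈ K := by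
  rw [← hKc.closure_eq, Metric.mem_closure_iff]
  intro δ hδ
  obtain ⟨om, hom, hclose, -⟩ := exists_near_of_primalGap_le hd hm ha hab hgap hK hδ
  exact ⟨om, hom, by rwa [dist_comm, dist_eq_norm]⟩

theorem primalGap_nonpos_of_primalGap_le (hd : FirstOrderStrongConvex m d) (hm : 0 < m)
    (ha : 0 < a) (hab : a < b) (hgap : primalGap K a d lam eta ≤ primalGap K b d lam eta)
    (hK : K.Nonempty) : primalGap K b d lam eta ≤ 0 := by
  have hbound : ∀ δ > 0, primalGap K b d lam eta ≤ ‖eta‖ * δ + (b - a) * (m / 2) * δ ^ 2 := by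
    intro δ hδ
    obtain ⟨om, hom, hclose, hlt⟩ := exists_near_of_primalGap_le hd hm ha hab hgap hK hδ
    have hinner : ⟪eta, lam - om⟫ ≤ ‖eta‖ * δ := by
      rw [← norm_sub_rev] at hclose
      exact (real_inner_le_norm _ _).trans (by gcongr)
    have hsq : 0 ≤ b * (m / 2) * ‖om - lam‖ ^ 2 := by have := ha.trans hab; positivity
    linarith [auchmuty_add_le_inner hd (ha.trans hab).le lam eta om]
  have hlim : Filter.Tendsto (fun δ : ℝ => ‖eta‖ * δ + (b - a) * (m / 2) * δ ^ 2)
      (nhdsWithin 0 (Set.Ioi 0)) (nhds 0) :=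
    ((by fun_prop : Continuous fun δ : ℝ => ‖eta‖ * δ + (b - a) * (m / 2) * δ ^ 2).tendsto' 0 0
      (by simp)).mono_left nhdsWithin_le_nhds
  exact ge_of_tendsto hlim (eventually_nhdsWithin_of_forall hbound)

end Auchmuty

theorem stmt5_general {nl nx nu : ℕ}
    (K : Set (EuclideanSpace ℝ (Fin nl)))
    (hK : K.Nonempty) (hKclosed : IsClosed K) (hKconvex : Convex ℝ K)
    (d : EuclideanSpace ℝ (Fin nl) → ℝ) (m : ℝ) (hm : 0 < m)
    (hddiff : Differentiable ℝ d)
    (hstrong : ∀ x y : EuclideanSpace ℝ (Fin nl),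
      d x + ⟪gradient d x, y - x⟫ + m / 2 * ‖y - x‖ ^ 2 ≤ d y)
    (a b : ℝ) (ha : 0 < a) (hab : a < b)
    (F : EuclideanSpace ℝ (Fin nx) → EuclideanSpace ℝ (Fin nu) →
      EuclideanSpace ℝ (Fin nl) → EuclideanSpace ℝ (Fin nl)) :
    ∀ (x : EuclideanSpace ℝ (Fin nx)) (u : EuclideanSpace ℝ (Fin nu))
      (lam : EuclideanSpace ℝ (Fin nl)),
      (lam ∈ K ∧ ∀ om ∈ K, 0 ≤ ⟪om - lam, F x u lam⟫) ↔
      (∃ eta : EuclideanSpace ℝ (Fin nl), F x u lam - eta = 0 ∧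
        Dgap K a b d lam eta ≤ 0) := by
  intro x u lam
  have hb : 0 < b := ha.trans hab
  constructor
  · rintro ⟨hlam, hvi⟩
    refine ⟨F x u lam, sub_self _, ?_⟩
    rw [Dgap, sub_nonpos]
    exact (primalGap_nonpos hstrong hm.le ha.le hvi).trans (primalGap_nonneg hstrong hm hb hlam)
  · rintro ⟨eta, hFeta, hgap⟩
    obtain rfl : F x u lam = eta := sub_eq_zero.mp hFeta
    rw [Dgap, sub_nonpos] at hgap
    have hlam : lam ∈ K := mem_of_primalGap_le hstrong hm ha hab hgap hK hKclosed
    have hmax : IsMaxOn (Auchmuty b d lam (F x u lam)) K lam :=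
      isMaxOn_auchmuty hstrong hm hb (primalGap_nonpos_of_primalGap_le hstrong hm ha hab hgap hK)
    exact ⟨hlam, fun om hom => hmax.inner_nonneg_of_auchmuty (hddiff lam) hKconvex hlam hom⟩

/-- D-gap-constraint-based reformulation of the equilibrium constraint
`λ ∈ SOL(K, F(x, u, λ))` for a nonempty closed convex `K`. -/
theorem stmt5 {nl nx nu : ℕ} (hnl : 0 < nl)
    (K : Set (EuclideanSpace ℝ (Fin nl)))
    (hK : K.Nonempty) (hKclosed : IsClosed K) (hKconvex : Convex ℝ K)
    (d : EuclideanSpace ℝ (Fin nl) → ℝ) (m : ℝ) (hm : 0 < m)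
    (hddiff : Differentiable ℝ d)
    (hstrong : ∀ x y : EuclideanSpace ℝ (Fin nl),
      d x + ⟪gradient d x, y - x⟫ + m / 2 * ‖y - x‖ ^ 2 ≤ d y)
    (a b : ℝ) (ha : 0 < a) (hab : a < b)
    (F : EuclideanSpace ℝ (Fin nx) → EuclideanSpace ℝ (Fin nu) →
      EuclideanSpace ℝ (Fin nl) → EuclideanSpace ℝ (Fin nl)) :
    ∀ (x : EuclideanSpace ℝ (Fin nx)) (u : EuclideanSpace ℝ (Fin nu))
      (lam : EuclideanSpace ℝ (Fin nl)),
      (lam ∈ K ∧ ∀ om ∈ K, 0 ≤ ⟪om - lam, F x u lam⟫) ↔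
      (∃ eta : EuclideanSpace ℝ (Fin nl), F x u lam - eta = 0 ∧
        Dgap K a b d lam eta ≤ 0) :=
  stmt5_general K hK hKclosed hKconvex d m hm hddiff hstrong a b ha hab F
end
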